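/- arXiv:0704.3744 — 2 statements merged into one kernel-verified Lean document; each statement's English description precedes it below -/
import Mathlib

section
/- Let a : Fin N → ℝ be a cyclic orthonormal generator in ℝ^N and let θ : Fin N → ℝ satisfy cos θ_n = C_n and sin θ_n = S_n for every n ∈ Fin N. Then for every n ∈ Fin N with n ≠ 0, θ_n + θ_{−n} ≡ π/2 (mod 2π), where −n denotes negation in Fin N; that is, there exists an integer m with θ_n + θ_{−n} = π/2 + 2πm. -/
open Real

/-!
Put `z_n = C_n + i S_n = e^{iπ/4} ∑_j a_j ψ_n(-j)`, where `ψ_n(j) = exp (2πi n j / N)` is an additive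
character of `ℤ/N`. Since `ψ_{-n}(-k) = ψ_n(k)`, the product `z_n z_{-n}` equals `e^{iπ/2}` times
`∑_{j,k} a_j a_k ψ_n(k - j) = ∑_s (∑_j a_j a_{j+s}) ψ_n(s)`, which is `ψ_n(0) = 1` because the cyclic
autocorrelation of `a` is the delta at `0`. Hence `e^{i(θ_n + θ_{-n})} = e^{iπ/2}`.
-/

open Complex Finset

section Autocorrelation

variable {G R S : Type*} [AddCommGroup G] [Fintype G] [CommRing R] [CommRing S] [DecidableEq G]

def IsCyclicOrthonormalGenerator (a : G → R) : Prop :=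
  ∀ s, ∑ j, a j * a (j + s) = if s = 0 then 1 else 0

theorem IsCyclicOrthonormalGenerator.map {a : G → R} (ha : IsCyclicOrthonormalGenerator a)
    (f : R →+* S) : IsCyclicOrthonormalGenerator fun j => f (a j) := fun s => by
  simpa [map_sum, apply_ite f] using congrArg f (ha s)

theorem IsCyclicOrthonormalGenerator.sum_addChar_neg_mul_sum_addChar {a : G → R}
    (ha : IsCyclicOrthonormalGenerator a) (ψ : AddChar G R) :
    (∑ j, a j * ψ (-j)) * ∑ k, a k * ψ k = 1 := calc
  _ = ∑ j, ∑ s, a j * a (j + s) * ψ s := by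
    rw [sum_mul_sum]
    refine sum_congr rfl fun j _ => (Fintype.sum_equiv (Equiv.addLeft j) _ _ fun s => ?_).symm
    rw [Equiv.coe_addLeft, ← neg_add_cancel_left j s, AddChar.map_add_eq_mul ψ (-j),
      neg_add_cancel_left]
    ring
  _ = ∑ s, (∑ j, a j * a (j + s)) * ψ s := by
    rw [sum_comm]
    simp_rw [sum_mul]
  _ = 1 := by simp [ha _]

end Autocorrelation

section FinCharacter

variable {N : ℕ} [NeZero N]

def Fin.toZModAddHom : Fin N →+ ZMod N where
  toFun j := (j : ℕ)
  map_zero' := by simp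
  map_add' j k := by simp [Fin.val_add, ZMod.natCast_mod]

noncomputable def finExpAddChar (n : Fin N) : AddChar (Fin N) ℂ :=
  ZMod.stdAddChar.compAddMonoidHom
    ((AddMonoidHom.mulLeft (Fin.toZModAddHom n)).comp Fin.toZModAddHom)

theorem finExpAddChar_apply (n j : Fin N) :
    finExpAddChar n j = cexp (2 * π * I * (n : ℕ) * (j : ℕ) / N) := by
  rw [finExpAddChar, AddChar.compAddMonoidHom_apply, ZMod.stdAddChar_apply]
  simp [Fin.toZModAddHom, ← Nat.cast_mul, ZMod.toCircle_natCast, mul_assoc]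

theorem finExpAddChar_neg_neg (n j : Fin N) : finExpAddChar (-n) (-j) = finExpAddChar n j := by
  simp [finExpAddChar]

theorem cexp_pi_div_four_sub_mul_I (n j : Fin N) :
    cexp ((π / 4 - 2 * π * (n : ℕ) / N * (j : ℕ) : ℝ) * I) =
      cexp (π / 4 * I) * finExpAddChar n (-j) := by
  rw [AddChar.map_neg_eq_inv, finExpAddChar_apply, ← Complex.exp_neg, ← Complex.exp_add]
  congr 1
  push_cast
  ring

end FinCharacter

theorem cexp_mul_I_eq_sum_of_cos_of_sin {ι : Type*} [Fintype ι] {θ : ℝ} {a φ : ι → ℝ}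
    (hcos : Real.cos θ = ∑ j, a j * Real.cos (φ j))
    (hsin : Real.sin θ = ∑ j, a j * Real.sin (φ j)) :
    cexp (θ * I) = ∑ j, a j * cexp (φ j * I) := by
  simp_rw [exp_mul_I, ← ofReal_cos, ← ofReal_sin, hcos, hsin]
  push_cast
  rw [sum_mul, ← sum_add_distrib]
  exact sum_congr rfl fun j _ => by ring

theorem cog_theta_add_theta_neg_congr_general (N : ℕ) [NeZero N] (a : Fin N → ℝ)
    (ha : ∀ s : Fin N, (∑ j : Fin N, a j * a (j + s)) = if s = 0 then 1 else 0)
    (θ : Fin N → ℝ)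
    (hcos : ∀ n : Fin N, Real.cos (θ n) =
      ∑ j : Fin N, a j * Real.cos (π / 4 - (2 * π * (n : ℕ) / N) * (j : ℕ)))
    (hsin : ∀ n : Fin N, Real.sin (θ n) =
      ∑ j : Fin N, a j * Real.sin (π / 4 - (2 * π * (n : ℕ) / N) * (j : ℕ))) :
    ∀ n : Fin N, n ≠ 0 → ∃ m : ℤ, θ n + θ (-n) = π / 2 + 2 * π * m := by
  intro n _
  have hexp (n : Fin N) :
      cexp (θ n * I) = cexp (π / 4 * I) * ∑ j, (a j : ℂ) * finExpAddChar n (-j) := by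
    rw [cexp_mul_I_eq_sum_of_cos_of_sin (hcos n) (hsin n), mul_sum]
    simp_rw [cexp_pi_div_four_sub_mul_I]
    exact sum_congr rfl fun j _ => by ring
  have hexp_add : cexp ((θ n + θ (-n) : ℝ) * I) = cexp ((π / 2 : ℝ) * I) := calc
    _ = cexp (π / 4 * I) ^ 2 * ((∑ j, (a j : ℂ) * finExpAddChar n (-j)) *
          ∑ k, (a k : ℂ) * finExpAddChar n k) := by
      rw [ofReal_add, add_mul, Complex.exp_add, hexp, hexp]
      simp_rw [finExpAddChar_neg_neg]
      ring
    _ = cexp ((π / 2 : ℝ) * I) := by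
      have h := (IsCyclicOrthonormalGenerator.map ha ofRealHom).sum_addChar_neg_mul_sum_addChar
        (finExpAddChar n)
      simp only [ofRealHom_eq_coe] at h
      rw [h, mul_one, ← Complex.exp_nat_mul]
      push_cast
      ring_nf
  obtain ⟨m, hm⟩ := Complex.exp_eq_exp_iff_exists_int.mp hexp_add
  exact ⟨m, by simpa [mul_comm] using congrArg im hm⟩

theorem cog_theta_add_theta_neg_congr (N : ℕ) (hN : 2 ≤ N) [NeZero N] (a : Fin N → ℝ)
    (ha : ∀ s : Fin N, (∑ j : Fin N, a j * a (j + s)) = if s = 0 then 1 else 0)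
    (θ : Fin N → ℝ)
    (hcos : ∀ n : Fin N, Real.cos (θ n) =
      ∑ j : Fin N, a j * Real.cos (π / 4 - (2 * π * (n : ℕ) / N) * (j : ℕ)))
    (hsin : ∀ n : Fin N, Real.sin (θ n) =
      ∑ j : Fin N, a j * Real.sin (π / 4 - (2 * π * (n : ℕ) / N) * (j : ℕ))) :
    ∀ n : Fin N, n ≠ 0 → ∃ m : ℤ, θ n + θ (-n) = π / 2 + 2 * π * m :=
  cog_theta_add_theta_neg_congr_general N a ha θ hcos hsin
end

section
/- A vector a : Fin N → ℝ is a cyclic orthonormal generator in ℝ^N if and only if there exists θ : Fin N → ℝ with (θ_0 ≡ π/4 (mod 2π) or θ_0 ≡ 5π/4 (mod 2π)), with θ_n + θ_{−n} ≡ π/2 (mod 2π) for every n ∈ Fin N with n ≠ 0 (where −n denotes negation in Fin N), and such that a_k = (√2/N) · ∑_{n ∈ Fin N} cos((2πn/N)·k + θ_n) for every k ∈ Fin N. -/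
/-!
Let `â` be the discrete Fourier transform of `a` on `ℤ/Nℤ`. The transform of the cyclic
autocorrelation `s ↦ ∑ⱼ aⱼ aⱼ₊ₛ` is `|â|²`, so `a` is a cog iff `|âₙ| = 1` for every `n`.
The signal `k ↦ (√2/N) ∑ₙ cos(2πnk/N + θₙ)` has transform `n ↦ (√2/2)(e^{iθₙ} + e^{-iθ₋ₙ})`,
of squared modulus `1 + cos(θₙ + θ₋ₙ)`, and the phase conditions say exactly that this cosine
vanishes. Conversely, the transform of a real signal satisfies `â₋ₙ = conj âₙ`, and for unimodular
`â` the phases `θₙ = arg âₙ + π/4` give back `â`.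
-/

open Real

open Complex (I arg)
open scoped Complex ComplexConjugate

namespace Complex

lemma exp_arg_mul_I_of_norm_eq_one {z : ℂ} (hz : ‖z‖ = 1) : cexp (arg z * I) = z := by
  simpa [hz] using norm_mul_exp_arg_mul_I z

lemma arg_add_arg_conj (z : ℂ) : arg z + arg (conj z) = if arg z = π then 2 * π else 0 := by
  rw [arg_conj]
  split_ifs with h
  · rw [h]; ring
  · ring

lemma arg_eq_zero_or_pi_of_conj_eq {z : ℂ} (hz : conj z = z) : arg z = 0 ∨ arg z = π := by
  have := arg_add_arg_conj z
  rw [hz] at this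
  split_ifs at this with h
  · exact .inr h
  · exact .inl (by linarith)

lemma exists_arg_add_arg_conj_eq (z : ℂ) : ∃ m : ℤ, arg z + arg (conj z) = 2 * π * m := by
  rw [arg_add_arg_conj]
  split_ifs
  · exact ⟨1, by simp⟩
  · exact ⟨0, by simp⟩

end Complex

section CanonicalSpectrum

variable {G : Type*}

/-- The cosine at frequency `n` with phase `θ n` contributes `e^{iθ n}` at `n` and `e^{-iθ n}`
at `-n`. -/
noncomputable def canonicalSpectrum [Neg G] (θ : G → ℝ) (n : G) : ℂ :=
  (√2 / 2 : ℝ) * (cexp (θ n * I) + cexp (-θ (-n) * I))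

lemma sq_norm_canonicalSpectrum [Neg G] (θ : G → ℝ) (n : G) :
    ‖canonicalSpectrum θ n‖ ^ 2 = 1 + cos (θ n + θ (-n)) := by
  rw [Complex.sq_norm, canonicalSpectrum, Complex.normSq_apply]
  simp only [Complex.mul_re, Complex.mul_im, Complex.add_re, Complex.add_im, Complex.ofReal_re,
    Complex.ofReal_im, ← Complex.ofReal_neg, Complex.exp_ofReal_mul_I_re,
    Complex.exp_ofReal_mul_I_im, cos_neg, sin_neg, cos_add]
  have h2 : √2 ^ 2 = 2 := Real.sq_sqrt zero_le_two
  nlinarith [sin_sq_add_cos_sq (θ n), sin_sq_add_cos_sq (θ (-n))]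

/-- By the symmetry of `ψ`, `e^{-iθ(-n)} = ψ n e^{-iπ/4}`, and `e^{iπ/4} + e^{-iπ/4} = √2`. -/
lemma canonicalSpectrum_arg_add_pi_div_four [InvolutiveNeg G] (ψ : G → ℂ)
    (hnorm : ∀ n, ‖ψ n‖ = 1) (hconj : ∀ n, ψ (-n) = conj (ψ n)) :
    canonicalSpectrum (fun n ↦ arg (ψ n) + π / 4) = ψ := by
  ext1 n
  have h1 : cexp (↑(arg (ψ n) + π / 4) * I) = ψ n * cexp (↑(π / 4) * I) := by
    rw [Complex.ofReal_add, add_mul, Complex.exp_add,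
      Complex.exp_arg_mul_I_of_norm_eq_one (hnorm n)]
  have h2 : cexp (-↑(arg (ψ (-n)) + π / 4) * I) = ψ n * cexp (-↑(π / 4) * I) := by
    rw [Complex.ofReal_add, neg_add, add_mul, Complex.exp_add, neg_mul (arg _ : ℂ),
      Complex.exp_neg, Complex.exp_arg_mul_I_of_norm_eq_one (hnorm _),
      RCLike.inv_eq_conj (hnorm _), hconj, Complex.conj_conj]
  have hsqrt : ((√2 : ℝ) : ℂ) ^ 2 = 2 := by exact_mod_cast Real.sq_sqrt zero_le_two
  simp only [canonicalSpectrum, h1, h2, ← mul_add, ← Complex.two_cos, ← Complex.ofReal_cos,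
    cos_pi_div_four]
  push_cast
  linear_combination (ψ n / 2) * hsqrt

lemma cos_apply_add_apply_neg_eq_zero [AddGroup G] {θ : G → ℝ}
    (hθ0 : (∃ m : ℤ, θ 0 = π / 4 + 2 * π * m) ∨ (∃ m : ℤ, θ 0 = 5 * π / 4 + 2 * π * m))
    (hpair : ∀ n : G, n ≠ 0 → ∃ m : ℤ, θ n + θ (-n) = π / 2 + 2 * π * m) (n : G) :
    cos (θ n + θ (-n)) = 0 := by
  rw [Real.cos_eq_zero_iff]
  by_cases hn : n = 0
  · subst hn
    rw [neg_zero]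
    rcases hθ0 with ⟨m, hm⟩ | ⟨m, hm⟩
    · exact ⟨4 * m, by rw [hm]; push_cast; ring⟩
    · exact ⟨4 * m + 2, by rw [hm]; push_cast; ring⟩
  · obtain ⟨m, hm⟩ := hpair n hn
    exact ⟨2 * m, by rw [hm]; push_cast; ring⟩

end CanonicalSpectrum

namespace ZMod

variable {N : ℕ} [NeZero N]

lemma stdAddChar_mul (n k : ZMod N) :
    stdAddChar (n * k) = cexp (↑(2 * π * n.val / N * k.val) * I) := by
  have : n * k = ((n.val * k.val : ℕ) : ZMod N) := by simp
  rw [this, stdAddChar_apply, toCircle_natCast]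
  push_cast
  congr 1
  ring

lemma dft_autocorrelation (Φ : ZMod N → ℂ) (k : ZMod N) :
    𝓕 (fun s ↦ ∑ j, conj (Φ j) * Φ (j + s)) k = conj (𝓕 Φ k) * 𝓕 Φ k := by
  simp only [dft_apply, smul_eq_mul, map_sum, map_mul, ← AddChar.map_neg_eq_conj, neg_neg,
    Finset.mul_sum, Finset.sum_mul]
  rw [Finset.sum_comm]
  conv_rhs => rw [Finset.sum_comm]
  refine Finset.sum_congr rfl fun j _ ↦ ?_
  conv_rhs => rw [← Equiv.sum_comp (Equiv.addLeft j)]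
  refine Finset.sum_congr rfl fun s _ ↦ ?_
  have : -(s * k) = j * k + -((j + s) * k) := by ring
  rw [Equiv.coe_addLeft, this, AddChar.map_add_eq_mul]
  ring

lemma dft_ofReal_neg (a : ZMod N → ℝ) (k : ZMod N) :
    𝓕 (fun j ↦ (a j : ℂ)) (-k) = conj (𝓕 (fun j ↦ (a j : ℂ)) k) := by
  simp only [dft_apply, smul_eq_mul, map_sum, map_mul, Complex.conj_ofReal, mul_neg,
    ← AddChar.map_neg_eq_conj]

lemma dft_single_zero : 𝓕 (Pi.single 0 1 : ZMod N → ℂ) = fun _ ↦ 1 := by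
  ext k
  simp [dft_apply, Pi.single_apply]

lemma autocorrelation_eq_single_iff_norm_dft_eq_one (a : ZMod N → ℝ) :
    (∀ s, ∑ j, a j * a (j + s) = if s = 0 then 1 else 0) ↔
      ∀ k, ‖𝓕 (fun j ↦ (a j : ℂ)) k‖ = 1 := by
  set R : ZMod N → ℂ := fun s ↦ ((∑ j, a j * a (j + s) : ℝ) : ℂ)
  have hR : 𝓕 R = fun k ↦ ((‖𝓕 (fun j ↦ (a j : ℂ)) k‖ ^ 2 : ℝ) : ℂ) := by
    ext k
    have := dft_autocorrelation (fun j ↦ (a j : ℂ)) k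
    simp only [Complex.conj_ofReal] at this
    simpa [R, Complex.conj_mul'] using this
  calc (∀ s, ∑ j, a j * a (j + s) = if s = 0 then 1 else 0)
      ↔ R = Pi.single 0 1 := by
        simp only [R, funext_iff, Pi.single_apply]
        refine forall_congr' fun s ↦ ?_
        split_ifs <;> norm_cast
    _ ↔ 𝓕 R = 𝓕 (Pi.single 0 1) := dft.injective.eq_iff.symm
    _ ↔ ∀ k, ‖𝓕 (fun j ↦ (a j : ℂ)) k‖ = 1 := by
        rw [hR, dft_single_zero, funext_iff]
        refine forall_congr' fun k ↦ ?_
        rw [← Complex.ofReal_one, Complex.ofReal_inj,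
          pow_eq_one_iff_of_nonneg (norm_nonneg _) two_ne_zero]

lemma invDFT_canonicalSpectrum (θ : ZMod N → ℝ) (k : ZMod N) :
    𝓕⁻ (canonicalSpectrum θ) k =
      ((√2 / N * ∑ n, cos (2 * π * n.val / N * k.val + θ n) : ℝ) : ℂ) := by
  set x : ZMod N → ℝ := fun n ↦ 2 * π * n.val / N * k.val + θ n
  have hpos (n : ZMod N) : stdAddChar (n * k) * cexp (θ n * I) = cexp (x n * I) := by
    rw [stdAddChar_mul, ← Complex.exp_add]
    push_cast [x]
    congr 1
    ring
  have hneg (n : ZMod N) : stdAddChar (-n * k) * cexp (-θ n * I) = cexp (-x n * I) := by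
    rw [neg_mul, AddChar.map_neg_eq_inv, stdAddChar_mul, ← Complex.exp_neg, ← Complex.exp_add]
    push_cast [x]
    congr 1
    ring
  calc 𝓕⁻ (canonicalSpectrum θ) k
      = (N : ℂ)⁻¹ * (√2 / 2 : ℝ) * (∑ n, stdAddChar (n * k) * cexp (θ n * I) +
          ∑ n, stdAddChar (n * k) * cexp (-θ (-n) * I)) := by
        simp only [invDFT_apply, canonicalSpectrum, smul_eq_mul, ← Finset.sum_add_distrib,
          Finset.mul_sum]
        refine Finset.sum_congr rfl fun n _ ↦ ?_
        ring
    _ = (N : ℂ)⁻¹ * (√2 / 2 : ℝ) * ∑ n, (cexp (x n * I) + cexp (-x n * I)) := by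
        rw [← Equiv.sum_comp (Equiv.neg _) (fun n ↦ stdAddChar (n * k) * cexp (-θ (-n) * I)),
          ← Finset.sum_add_distrib]
        simp only [Equiv.neg_apply, neg_neg, hpos, hneg]
    _ = ((√2 / N * ∑ n, cos (x n) : ℝ) : ℂ) := by
        simp only [← Complex.two_cos, ← Finset.mul_sum]
        push_cast
        field_simp

theorem autocorrelation_eq_single_iff_canonical_form (N : ℕ) [NeZero N] (a : ZMod N → ℝ) :
    (∀ s : ZMod N, (∑ j : ZMod N, a j * a (j + s)) = if s = 0 then 1 else 0) ↔
      ∃ θ : ZMod N → ℝ,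
        ((∃ m : ℤ, θ 0 = π / 4 + 2 * π * m) ∨ (∃ m : ℤ, θ 0 = 5 * π / 4 + 2 * π * m)) ∧
        (∀ n : ZMod N, n ≠ 0 → ∃ m : ℤ, θ n + θ (-n) = π / 2 + 2 * π * m) ∧
        (∀ k : ZMod N,
          a k = (√2 / N) * ∑ n : ZMod N, cos ((2 * π * n.val / N) * k.val + θ n)) := by
  rw [autocorrelation_eq_single_iff_norm_dft_eq_one]
  set â := 𝓕 (fun j ↦ (a j : ℂ))
  have hform (θ : ZMod N → ℝ) :
      (∀ k, a k = √2 / N * ∑ n, cos (2 * π * n.val / N * k.val + θ n)) ↔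
        â = canonicalSpectrum θ := by
    rw [← LinearEquiv.eq_symm_apply, funext_iff]
    simp only [invDFT_canonicalSpectrum, Complex.ofReal_inj]
  constructor
  · intro hnorm
    have hconj : ∀ n, â (-n) = conj (â n) := dft_ofReal_neg a
    refine ⟨fun n ↦ arg (â n) + π / 4, ?_, fun n _ ↦ ?_,
      (hform _).2 (canonicalSpectrum_arg_add_pi_div_four â hnorm hconj).symm⟩
    · have h0 : conj (â 0) = â 0 := by rw [← hconj, neg_zero]
      rcases Complex.arg_eq_zero_or_pi_of_conj_eq h0 with h | h
      · exact .inl ⟨0, by dsimp only; rw [h]; ring⟩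
      · exact .inr ⟨0, by dsimp only; rw [h]; ring⟩
    · obtain ⟨m, hm⟩ := Complex.exists_arg_add_arg_conj_eq (â n)
      exact ⟨m, by dsimp only; rw [hconj, ← hm]; ring⟩
  · rintro ⟨θ, hθ0, hpair, hθ⟩ k
    have hsq := sq_norm_canonicalSpectrum θ k
    rw [cos_apply_add_apply_neg_eq_zero hθ0 hpair, add_zero, ← (hform θ).1 hθ] at hsq
    exact (pow_eq_one_iff_of_nonneg (norm_nonneg _) two_ne_zero).1 hsq

end ZMod

theorem cog_iff_canonical_form_general (N : ℕ) [NeZero N] (a : Fin N → ℝ) :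
    (∀ s : Fin N, (∑ j : Fin N, a j * a (j + s)) = if s = 0 then 1 else 0) ↔
      ∃ θ : Fin N → ℝ,
        ((∃ m : ℤ, θ 0 = π / 4 + 2 * π * m) ∨ (∃ m : ℤ, θ 0 = 5 * π / 4 + 2 * π * m)) ∧
        (∀ n : Fin N, n ≠ 0 → ∃ m : ℤ, θ n + θ (-n) = π / 2 + 2 * π * m) ∧
        (∀ k : Fin N,
          a k = (Real.sqrt 2 / N) *
            ∑ n : Fin N, Real.cos ((2 * π * (n : ℕ) / N) * (k : ℕ) + θ n)) := by
  -- `ZMod (M + 1)` is `Fin (M + 1)` by definition.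
  obtain ⟨M, rfl⟩ := Nat.exists_eq_succ_of_ne_zero (NeZero.ne N)
  exact ZMod.autocorrelation_eq_single_iff_canonical_form (M + 1) a

theorem cog_iff_canonical_form (N : ℕ) (hN : 2 ≤ N) [NeZero N] (a : Fin N → ℝ) :
    (∀ s : Fin N, (∑ j : Fin N, a j * a (j + s)) = if s = 0 then 1 else 0) ↔
      ∃ θ : Fin N → ℝ,
        ((∃ m : ℤ, θ 0 = π / 4 + 2 * π * m) ∨ (∃ m : ℤ, θ 0 = 5 * π / 4 + 2 * π * m)) ∧
        (∀ n : Fin N, n ≠ 0 → ∃ m : ℤ, θ n + θ (-n) = π / 2 + 2 * π * m) ∧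
        (∀ k : Fin N,
          a k = (Real.sqrt 2 / N) *
            ∑ n : Fin N, Real.cos ((2 * π * (n : ℕ) / N) * (k : ℕ) + θ n)) :=
  cog_iff_canonical_form_general N a
end
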